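/- Let E be a measurable space, N ≥ 1, 1 ≤ k ≤ N, ν an exchangeable probability measure on E^N and μ a probability measure on E. Then the relative entropy of the k-dimensional marginal satisfies Ent((π_k)_*ν | μ^{⊗k}) ≤ ⌊N/k⌋^{−1} Ent(ν | μ^{⊗N}) ≤ (2k/N) Ent(ν | μ^{⊗N}), where π_k : E^N → E^k is the projection onto the first k coordinates and ⌊N/k⌋ is the integer part of N/k. -/

import Mathlib

open MeasureTheory ENNReal Classical

/-- Relative entropy `Ent(ν|μ) = ∫ log (dν/dμ) dν` if `ν ≪ μ` (and the integral exists),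
and `Ent(ν|μ) = ∞` otherwise. -/
noncomputable def Ent {E : Type*} [MeasurableSpace E] (ν μ : Measure E) : ℝ≥0∞ :=
  if ν ≪ μ ∧ Integrable (fun x => Real.log (ν.rnDeriv μ x).toReal) ν
  then ENNReal.ofReal (∫ x, Real.log (ν.rnDeriv μ x).toReal ∂ν)
  else ⊤

/-! Relative entropy with respect to a product reference measure is superadditive:
`Ent(ν | μ₁ ⊗ μ₂) = Ent(ν₁ | μ₁) + Ent(ν | ν₁ ⊗ μ₂) ≥ Ent(ν₁ | μ₁) + Ent(ν₂ | μ₂)`, the equality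
because `ν₁ ⊗ μ₂` has density `dν₁/dμ₁` with respect to `μ₁ ⊗ μ₂`, the inequality by data
processing along the second projection. Group `m = ⌊N/k⌋` disjoint blocks of `k` coordinates:
by data processing and superadditivity, `Ent(ν | μ^{⊗N})` dominates the sum of the entropies of
the `m` block marginals, and by exchangeability each of them is the marginal on the first `k`
coordinates. Finally `N < (m + 1) k ≤ 2 m k` gives `1/m ≤ 2k/N`. -/

open InformationTheory

lemma ent_eq_klDiv {X : Type*} [MeasurableSpace X] (ν μ : Measure X) [IsProbabilityMeasure ν]
    [IsProbabilityMeasure μ] : Ent ν μ = klDiv ν μ := by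
  rw [Ent, klDiv_def, ← llr_def]
  simp

namespace MeasureTheory

variable {A B : Type*} [MeasurableSpace A] [MeasurableSpace B]

lemma Measure.prod_eq_withDensity_rnDeriv_fst {κ μ₁ : Measure A} (μ₂ : Measure B)
    [SigmaFinite κ] [SigmaFinite μ₁] [SFinite μ₂] (h : κ ≪ μ₁) :
    κ.prod μ₂ = (μ₁.prod μ₂).withDensity fun p ↦ κ.rnDeriv μ₁ p.1 := by
  rw [← prod_withDensity_left (measurable_rnDeriv κ μ₁), withDensity_rnDeriv_eq κ μ₁ h]

variable {ν : Measure (A × B)} {μ₁ : Measure A} {μ₂ : Measure B} [IsProbabilityMeasure ν]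
  [IsProbabilityMeasure μ₁] [IsProbabilityMeasure μ₂]

lemma Measure.absolutelyContinuous_map_fst_prod (h : ν ≪ μ₁.prod μ₂) :
    ν ≪ (ν.map Prod.fst).prod μ₂ := by
  have h₁ : ν.map Prod.fst ≪ μ₁ := by simpa using h.map measurable_fst
  refine AbsolutelyContinuous.mk fun s hs hs0 ↦ ?_
  rw [prod_eq_withDensity_rnDeriv_fst μ₂ h₁, withDensity_apply_eq_zero' (by fun_prop)] at hs0
  rw [measure_eq_zero_iff_ae_notMem]
  filter_upwards [measure_eq_zero_iff_ae_notMem.mp (h hs0),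
    ae_of_ae_map measurable_fst.aemeasurable (rnDeriv_pos h₁)] with p hp hpos hps
  exact hp ⟨hpos.ne', hps⟩

lemma llr_prod_ae_eq_llr_map_fst_prod_add (h : ν ≪ μ₁.prod μ₂) :
    llr ν (μ₁.prod μ₂) =ᵐ[ν]
      fun p ↦ llr ν ((ν.map Prod.fst).prod μ₂) p + llr (ν.map Prod.fst) μ₁ p.1 := by
  have h₁ : ν.map Prod.fst ≪ μ₁ := by simpa using h.map measurable_fst
  have hν := Measure.absolutelyContinuous_map_fst_prod h
  have hprod := Measure.prod_eq_withDensity_rnDeriv_fst μ₂ h₁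
  have hac : (ν.map Prod.fst).prod μ₂ ≪ μ₁.prod μ₂ :=
    hprod ▸ withDensity_absolutelyContinuous (μ₁.prod μ₂) _
  have hchain := hν.ae_le (Measure.rnDeriv_mul_rnDeriv' (μ := ν) hac)
  have hdens : ((ν.map Prod.fst).prod μ₂).rnDeriv (μ₁.prod μ₂) =ᵐ[ν]
      fun p ↦ (ν.map Prod.fst).rnDeriv μ₁ p.1 := by
    rw [hprod]
    exact h.ae_le (Measure.rnDeriv_withDensity _ (by fun_prop))
  filter_upwards [hchain, hdens, Measure.rnDeriv_pos hν, hν.ae_le (Measure.rnDeriv_lt_top ν _),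
    ae_of_ae_map measurable_fst.aemeasurable (Measure.rnDeriv_pos h₁),
    ae_of_ae_map measurable_fst.aemeasurable
      (h₁.ae_le (Measure.rnDeriv_lt_top (ν.map Prod.fst) μ₁))]
    with p hp hdp hpos hlt hpos₁ hlt₁
  rw [llr, llr, llr, ← hp, Pi.mul_apply, hdp, ENNReal.toReal_mul,
    Real.log_mul (ENNReal.toReal_pos hpos.ne' hlt.ne).ne'
      (ENNReal.toReal_pos hpos₁.ne' hlt₁.ne).ne']

end MeasureTheory

namespace InformationTheory

section Prod

variable {X : Type*} [MeasurableSpace X]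

lemma klDiv_eq_ofReal_integral_llr {ν μ : Measure X} [IsProbabilityMeasure ν]
    [IsProbabilityMeasure μ] (hνμ : ν ≪ μ) (h_int : Integrable (llr ν μ) ν) :
    klDiv ν μ = ENNReal.ofReal (∫ x, llr ν μ x ∂ν) := by
  simp [klDiv_of_ac_of_integrable hνμ h_int]

lemma integral_llr_nonneg {ν μ : Measure X} [IsProbabilityMeasure ν]
    [IsProbabilityMeasure μ] (hνμ : ν ≪ μ) (h_int : Integrable (llr ν μ) ν) :
    0 ≤ ∫ x, llr ν μ x ∂ν := by
  simpa using integral_llr_add_sub_measure_univ_nonneg hνμ h_int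

variable {A B : Type*} [MeasurableSpace A] [MeasurableSpace B]
  {ν : Measure (A × B)} {μ₁ : Measure A} {μ₂ : Measure B} [IsProbabilityMeasure ν]
  [IsProbabilityMeasure μ₁] [IsProbabilityMeasure μ₂]

lemma klDiv_map_fst_add_klDiv_map_fst_prod_le :
    klDiv (ν.map Prod.fst) μ₁ + klDiv ν ((ν.map Prod.fst).prod μ₂) ≤ klDiv ν (μ₁.prod μ₂) := by
  have : IsProbabilityMeasure (ν.map Prod.fst) := Measure.isProbabilityMeasure_map (by fun_prop)
  by_cases hfin : klDiv ν (μ₁.prod μ₂) = ∞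
  · simp [hfin]
  obtain ⟨hac, hint⟩ := klDiv_ne_top_iff.mp hfin
  have hfin₁ : klDiv (ν.map Prod.fst) μ₁ ≠ ∞ :=
    ne_top_of_le_ne_top hfin (by simpa using klDiv_map_le ν (μ₁.prod μ₂) measurable_fst)
  obtain ⟨hac₁, hint₁⟩ := klDiv_ne_top_iff.mp hfin₁
  have hint₁' : Integrable (fun p ↦ llr (ν.map Prod.fst) μ₁ p.1) ν :=
    hint₁.comp_measurable measurable_fst
  have hdecomp := llr_prod_ae_eq_llr_map_fst_prod_add hac
  have hint' : Integrable (llr ν ((ν.map Prod.fst).prod μ₂)) ν :=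
    (hint.sub hint₁').congr (by filter_upwards [hdecomp] with p hp; simp [hp])
  have hac' := Measure.absolutelyContinuous_map_fst_prod hac
  have hsplit : ∫ p, llr ν (μ₁.prod μ₂) p ∂ν =
      ∫ a, llr (ν.map Prod.fst) μ₁ a ∂(ν.map Prod.fst) +
        ∫ p, llr ν ((ν.map Prod.fst).prod μ₂) p ∂ν := by
    rw [integral_congr_ae hdecomp, integral_add hint' hint₁', add_comm,
      integral_map measurable_fst.aemeasurable (by fun_prop)]
  rw [klDiv_eq_ofReal_integral_llr hac₁ hint₁, klDiv_eq_ofReal_integral_llr hac' hint',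
    klDiv_eq_ofReal_integral_llr hac hint, hsplit,
    ENNReal.ofReal_add (integral_llr_nonneg hac₁ hint₁) (integral_llr_nonneg hac' hint')]

theorem klDiv_map_fst_add_klDiv_map_snd_le :
    klDiv (ν.map Prod.fst) μ₁ + klDiv (ν.map Prod.snd) μ₂ ≤ klDiv ν (μ₁.prod μ₂) := by
  have : IsProbabilityMeasure (ν.map Prod.fst) := Measure.isProbabilityMeasure_map (by fun_prop)
  calc klDiv (ν.map Prod.fst) μ₁ + klDiv (ν.map Prod.snd) μ₂
    _ ≤ klDiv (ν.map Prod.fst) μ₁ + klDiv ν ((ν.map Prod.fst).prod μ₂) := by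
      gcongr
      simpa using klDiv_map_le ν ((ν.map Prod.fst).prod μ₂) measurable_snd
    _ ≤ klDiv ν (μ₁.prod μ₂) := klDiv_map_fst_add_klDiv_map_fst_prod_le

end Prod

theorem sum_klDiv_map_eval_le_klDiv_pi {n : ℕ} {X : Fin n → Type*}
    [∀ i, MeasurableSpace (X i)] (ν : Measure (∀ i, X i)) [IsProbabilityMeasure ν]
    (μ : ∀ i, Measure (X i)) [∀ i, IsProbabilityMeasure (μ i)] :
    ∑ i, klDiv (ν.map fun x ↦ x i) (μ i) ≤ klDiv ν (Measure.pi μ) := by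
  induction n with
  | zero => simp
  | succ n ih =>
    set e := MeasurableEquiv.piFinSuccAbove X 0
    have : IsProbabilityMeasure (ν.map e) := Measure.isProbabilityMeasure_map (by fun_prop)
    have : IsProbabilityMeasure ((ν.map e).map Prod.snd) :=
      Measure.isProbabilityMeasure_map (by fun_prop)
    have hfst : (ν.map e).map Prod.fst = ν.map fun x ↦ x 0 := by
      rw [Measure.map_map measurable_fst e.measurable]
      rfl
    have hsnd (j : Fin n) : ((ν.map e).map Prod.snd).map (fun x ↦ x j) =
        ν.map fun x ↦ x (Fin.succAbove 0 j) := by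
      rw [Measure.map_map (measurable_pi_apply _) measurable_snd,
        Measure.map_map (by fun_prop) e.measurable]
      rfl
    have htail := ih ((ν.map e).map Prod.snd) fun j ↦ μ (Fin.succAbove 0 j)
    simp only [hsnd] at htail
    calc ∑ i, klDiv (ν.map fun x ↦ x i) (μ i)
      _ = klDiv ((ν.map e).map Prod.fst) (μ 0) +
          ∑ j, klDiv (ν.map fun x ↦ x (Fin.succAbove 0 j)) (μ (Fin.succAbove 0 j)) := by
        rw [Fin.sum_univ_succAbove _ 0, hfst]
      _ ≤ klDiv ((ν.map e).map Prod.fst) (μ 0) +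
          klDiv ((ν.map e).map Prod.snd) (Measure.pi fun j ↦ μ (Fin.succAbove 0 j)) := by
        gcongr
      _ ≤ klDiv (ν.map e) ((μ 0).prod (Measure.pi fun j ↦ μ (Fin.succAbove 0 j))) :=
        klDiv_map_fst_add_klDiv_map_snd_le
      _ ≤ klDiv ν (Measure.pi μ) := by
        rw [← (measurePreserving_piFinSuccAbove μ 0).map_eq]
        exact klDiv_map_le _ _ e.measurable

end InformationTheory

lemma Equiv.Perm.exists_comp_eq_of_injective {ι κ : Type*} [Fintype ι] {φ ψ : κ → ι}
    (hφ : φ.Injective) (hψ : ψ.Injective) : ∃ σ : Equiv.Perm ι, σ ∘ φ = ψ := by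
  classical
  refine ⟨((Equiv.ofInjective φ hφ).symm.trans (Equiv.ofInjective ψ hψ)).extendSubtype,
    funext fun j ↦ ?_⟩
  rw [Function.comp_apply, Equiv.extendSubtype_apply_of_mem _ _ ⟨j, rfl⟩,
    show (⟨φ j, j, rfl⟩ : Set.range φ) = Equiv.ofInjective φ hφ j from rfl]
  simp

namespace MeasureTheory.Measure

variable {ι E : Type*} [Fintype ι] [MeasurableSpace E]

lemma map_comp_eq_of_perm_invariant {ν : Measure (ι → E)}
    (hν : ∀ σ : Equiv.Perm ι, ν.map (fun v i ↦ v (σ i)) = ν) {κ : Type*} {φ ψ : κ → ι}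
    (hφ : φ.Injective) (hψ : ψ.Injective) :
    ν.map (fun v j ↦ v (φ j)) = ν.map (fun v j ↦ v (ψ j)) := by
  obtain ⟨σ, hσ⟩ := Equiv.Perm.exists_comp_eq_of_injective hφ hψ
  conv_lhs => rw [← hν σ]
  rw [map_map (by fun_prop) (by fun_prop), ← hσ]
  rfl

lemma pi_map_curry_comp_injective {α β : Type*} [Fintype α] [Fintype β] (μ : ι → Measure E)
    [∀ i, IsProbabilityMeasure (μ i)] {φ : α × β → ι} (hφ : φ.Injective) :
    (Measure.pi μ).map (fun v a b ↦ v (φ (a, b))) =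
      Measure.pi fun a ↦ Measure.pi fun b ↦ μ (φ (a, b)) := by
  have hcurry : (fun (v : ι → E) a b ↦ v (φ (a, b))) =
      MeasurableEquiv.curry α β E ∘ fun v p ↦ v (φ p) := rfl
  rw [hcurry, ← map_map (MeasurableEquiv.measurable _) (by fun_prop), ← infinitePi_eq_pi,
    map_infinitePi_infinitePi_of_inj hφ, infinitePi_map_curry fun a b ↦ μ (φ (a, b))]
  simp only [infinitePi_eq_pi]

end MeasureTheory.Measure

theorem InformationTheory.natCast_mul_klDiv_map_comp_le_of_perm_invariant
    {ι κ E : Type*} [Fintype ι] [Fintype κ] [MeasurableSpace E]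
    (ν : Measure (ι → E)) [IsProbabilityMeasure ν]
    (hν : ∀ σ : Equiv.Perm ι, ν.map (fun v i ↦ v (σ i)) = ν) (μ : Measure E)
    [IsProbabilityMeasure μ] {ψ : κ → ι} (hψ : ψ.Injective) {m : ℕ}
    (hm : m * Fintype.card κ ≤ Fintype.card ι) :
    m * klDiv (ν.map fun v j ↦ v (ψ j)) (Measure.pi fun _ : κ ↦ μ) ≤
      klDiv ν (Measure.pi fun _ : ι ↦ μ) := by
  obtain ⟨φ⟩ : Nonempty (Fin m × κ ↪ ι) :=
    Function.Embedding.nonempty_of_card_le (by simpa using hm)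
  set B := fun (v : ι → E) (a : Fin m) (b : κ) ↦ v (φ (a, b))
  have : IsProbabilityMeasure (ν.map B) := Measure.isProbabilityMeasure_map (by fun_prop)
  have hblock (a : Fin m) : (ν.map B).map (fun x ↦ x a) = ν.map fun v j ↦ v (ψ j) := by
    rw [Measure.map_map (by fun_prop) (by fun_prop)]
    exact Measure.map_comp_eq_of_perm_invariant hν
      (φ.injective.comp (Prod.mk_right_injective a)) hψ
  calc m * klDiv (ν.map fun v j ↦ v (ψ j)) (Measure.pi fun _ : κ ↦ μ)
    _ = ∑ a, klDiv ((ν.map B).map fun x ↦ x a) (Measure.pi fun _ : κ ↦ μ) := by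
      simp [hblock]
    _ ≤ klDiv (ν.map B) (Measure.pi fun _ : Fin m ↦ Measure.pi fun _ : κ ↦ μ) :=
      sum_klDiv_map_eval_le_klDiv_pi _ _
    _ = klDiv (ν.map B) ((Measure.pi fun _ : ι ↦ μ).map B) := by
      rw [Measure.pi_map_curry_comp_injective _ φ.injective]
    _ ≤ klDiv ν (Measure.pi fun _ : ι ↦ μ) := klDiv_map_le _ _ (by fun_prop)

lemma ENNReal.inv_natCast_div_le_two_mul_div {N k : ℕ} (hk : 1 ≤ k) (hkN : k ≤ N) :
    ((N / k : ℕ) : ℝ≥0∞)⁻¹ ≤ 2 * k / N := by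
  have hm : 1 ≤ N / k := (Nat.one_le_div_iff hk).mpr hkN
  have hN : N ≤ N / k * (2 * k) := by
    nlinarith [Nat.lt_div_mul_add (a := N) hk]
  rw [ENNReal.le_div_iff_mul_le (by simp; omega) (by simp),
    ENNReal.inv_mul_le_iff (by simp; omega) (by simp)]
  exact_mod_cast hN

/-- For `1 ≤ k ≤ N`, an exchangeable probability measure `ν` on `E^N` and a probability
measure `μ` on `E`, the `k`-dimensional marginal of `ν` satisfies
`Ent((π_k)_*ν | μ^{⊗k}) ≤ ⌊N/k⌋⁻¹ · Ent(ν | μ^{⊗N}) ≤ (2k/N) · Ent(ν | μ^{⊗N})`. -/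
theorem ent_marginal_le_of_exchangeable
    {E : Type*} [MeasurableSpace E] {N k : ℕ} (hk : 1 ≤ k) (hkN : k ≤ N)
    (ν : Measure (Fin N → E)) [IsProbabilityMeasure ν]
    (hνexch : ∀ σ : Equiv.Perm (Fin N), ν.map (fun v i => v (σ i)) = ν)
    (μ : Measure E) [IsProbabilityMeasure μ] :
    Ent (ν.map (fun v (i : Fin k) => v (Fin.castLE hkN i))) (Measure.pi fun _ : Fin k => μ)
        ≤ ((N / k : ℕ) : ℝ≥0∞)⁻¹ * Ent ν (Measure.pi fun _ : Fin N => μ)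
      ∧ ((N / k : ℕ) : ℝ≥0∞)⁻¹ * Ent ν (Measure.pi fun _ : Fin N => μ)
        ≤ (2 * k / N : ℝ≥0∞) * Ent ν (Measure.pi fun _ : Fin N => μ) := by
  have : IsProbabilityMeasure (ν.map fun v (i : Fin k) ↦ v (Fin.castLE hkN i)) :=
    Measure.isProbabilityMeasure_map
      (by fun_prop : Measurable fun (v : Fin N → E) (i : Fin k) ↦ v (Fin.castLE hkN i)).aemeasurable
  have hm : N / k ≠ 0 := (Nat.div_pos hkN hk).ne'
  rw [ent_eq_klDiv, ent_eq_klDiv]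
  refine ⟨?_, by gcongr; exact ENNReal.inv_natCast_div_le_two_mul_div hk hkN⟩
  rw [← ENNReal.mul_le_iff_le_inv (by exact_mod_cast hm) (ENNReal.natCast_ne_top _)]
  exact natCast_mul_klDiv_map_comp_le_of_perm_invariant ν hνexch μ
    (Fin.castLE_injective hkN) (by simpa using Nat.div_mul_le_self N k)
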